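/- Let (I,ρ) be a finite or countable probability space with ρ(i) > 0 for all i, let d ∈ ℕ, and let a₁, a₂ : I → 𝒜_d be two functions into the permutation group of Y_d = {1,…,d}. Define A_k : X_ρ → 𝒜_d by A_k(x) = a_k(x₁)⁻¹ for x = (x_n)_{n≥1} ∈ X_ρ. If a measurable function W : X_ρ → 𝒜_d satisfies A₂(x)·W(x) = W(T_ρ x)·A₁(x) for m_ρ-a.e. x, then W is a.e. constant: there exists w₀ ∈ 𝒜_d with W(x) = w₀ for a.e. x. Consequently, A₁ and A₂ are cohomologous with respect to T_ρ (i.e. such a W exists) if and only if a₁ and a₂ are conjugate in 𝒜_d, i.e. there exists w₀ ∈ 𝒜_d with a₂(i)·w₀ = w₀·a₁(i) for all i ∈ I. -/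

import Mathlib

open MeasureTheory
open scoped ENNReal Classical

namespace OneSidedMarkov

noncomputable section

/-- The canonical σ-algebra on a sequence space over a (countable) alphabet:
the product of the discrete σ-algebras on the coordinates. -/
instance seqMS (E : Type*) : MeasurableSpace (ℕ → E) :=
  @MeasurableSpace.pi ℕ (fun _ => E) fun _ => ⊤

/-- Measurability of a map into a (countable) set carrying the discrete σ-algebra. -/
def DMeasurable {X : Type*} [MeasurableSpace X] {A : Type*} (f : X → A) : Prop :=
  ∀ a : A, MeasurableSet (f ⁻¹' {a})

/-- The cylinder set determined by a finite word. -/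
def cyl {E : Type*} {n : ℕ} (g : Fin n → E) : Set (ℕ → E) :=
  {x | ∀ k : Fin n, x (k : ℕ) = g k}

/-- The one-sided shift on a sequence space. -/
def shift {E : Type*} (x : ℕ → E) : ℕ → E := fun n => x (n + 1)

/-- `ρ` is a strictly positive probability vector. -/
def IsProbVector {I : Type*} (ρ : I → ℝ≥0∞) : Prop :=
  (∀ i, 0 < ρ i) ∧ ∑' i, ρ i = 1

/-- `μ` is the Bernoulli (product) measure with marginal `ρ`. -/
def IsProductMeasure {I : Type*} (ρ : I → ℝ≥0∞) (μ : Measure (ℕ → I)) : Prop :=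
  IsProbabilityMeasure μ ∧ ∀ (n : ℕ) (w : Fin n → I), μ (cyl w) = ∏ k, ρ (w k)

/-- Isomorphism mod 0 of two measure-preserving systems: a measure-preserving map,
invertible after discarding null sets, intertwining the transformations a.e. -/
def IsomorphicMod0 {X Y : Type*} [MeasurableSpace X] [MeasurableSpace Y]
    (μ : Measure X) (T : X → X) (ν : Measure Y) (S : Y → Y) : Prop :=
  ∃ Φ : X → Y, MeasurePreserving Φ μ ν ∧ (∀ᵐ x ∂μ, Φ (T x) = S (Φ x)) ∧
    ∃ Ψ : Y → X, MeasurePreserving Ψ ν μ ∧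
      (∀ᵐ x ∂μ, Ψ (Φ x) = x) ∧ ∀ᵐ y ∂ν, Φ (Ψ y) = y

/-! ### Stochastic graphs -/

/-- The data of a weighted directed graph: edge set `E`, vertex set `V`,
source and target maps, and weights on edges. -/
structure PreGraph (E V : Type*) where
  s : E → V
  t : E → V
  p : E → ℝ≥0∞

variable {E V F W : Type*}

namespace PreGraph

/-- A weighted directed graph is stochastic if weights are positive, the weights of the
edges starting at any given vertex sum to `1`, and every vertex has an outgoing and
an incoming edge. -/
def IsStochastic (G : PreGraph E V) : Prop :=
  (∀ g, 0 < G.p g) ∧ (∀ u : V, ∑' g : {g : E // G.s g = u}, G.p g.1 = 1) ∧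
    (∀ u : V, ∃ g, G.s g = u) ∧ ∀ v : V, ∃ g, G.t g = v

/-- `p0` is a stationary probability on the vertices of `G`. -/
def IsStationary (G : PreGraph E V) (p0 : V → ℝ≥0∞) : Prop :=
  (∀ u, 0 < p0 u) ∧ ∑' u, p0 u = 1 ∧
    ∀ v : V, ∑' g : {g : E // G.t g = v}, G.p g.1 * p0 (G.s g.1) = p0 v

/-- `G` is positively recurrent iff a stationary probability exists. -/
def PositivelyRecurrent (G : PreGraph E V) : Prop := ∃ p0, G.IsStationary p0

/-- One-step reachability along a directed edge. -/
def Step (G : PreGraph E V) (u v : V) : Prop := ∃ g, G.s g = u ∧ G.t g = v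

/-- `G` is irreducible: any ordered pair of vertices is joined by a finite directed path. -/
protected def Irreducible (G : PreGraph E V) : Prop :=
  ∀ u v : V, Relation.ReflTransGen G.Step u v

/-- The (backward) path condition for finite words of edges:
`s (g k) = t (g (k+1))` for consecutive indices. -/
def IsPathW (G : PreGraph E V) {n : ℕ} (g : Fin n → E) : Prop :=
  ∀ (k : ℕ) (h : k + 1 < n), G.s (g ⟨k, Nat.lt_of_succ_lt h⟩) = G.t (g ⟨k + 1, h⟩)

/-- The set of admissible one-sided infinite (backward) paths. -/
def PathSet (G : PreGraph E V) : Set (ℕ → E) := {x | ∀ n, G.s (x n) = G.t (x (n + 1))}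

/-- `m` is the stationary Markov measure of `(G, p0)`, characterized by its values on
cylinder sets: the cylinder over a backward path `g₁ … gₙ` has mass
`p g₁ ⋯ p gₙ · p0 (s gₙ)`, and cylinders over non-paths are null. -/
def IsMarkovMeasure (G : PreGraph E V) (p0 : V → ℝ≥0∞) (m : Measure (ℕ → E)) : Prop :=
  IsProbabilityMeasure m ∧
    ∀ (n : ℕ) (g : Fin (n + 1) → E),
      m (cyl g) =
        if G.IsPathW g then (∏ k, G.p (g k)) * p0 (G.s (g (Fin.last n))) else 0

end PreGraph

/-- A (weight-preserving, deterministic) homomorphism of weighted directed graphs. -/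
structure GraphHom (G : PreGraph E V) (H : PreGraph F W) where
  toFun : E → F
  vFun : V → W
  map_s : ∀ g, H.s (toFun g) = vFun (G.s g)
  map_t : ∀ g, H.t (toFun g) = vFun (G.t g)
  map_p : ∀ g, H.p (toFun g) = G.p g
  v_surj : Function.Surjective vFun
  deterministic : ∀ (u : V) (h : F), H.s h = vFun u → ∃! g : E, G.s g = u ∧ toFun g = h

namespace GraphHom

variable {G : PreGraph E V} {H : PreGraph F W}

/-- The factor map induced on path spaces by a graph homomorphism. -/
def pathMap (φ : GraphHom G H) (x : ℕ → E) : ℕ → F := fun n => φ.toFun (x n)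

/-- `φ` has degree `d` (with respect to the Markov measure `m` on the source):
almost every fiber of the induced factor map, within the path space, has exactly
`d` elements. -/
def HasDegree (φ : GraphHom G H) (m : Measure (ℕ → E)) (d : ℕ) : Prop :=
  ∀ᵐ x ∂m, (G.PathSet ∩ φ.pathMap ⁻¹' {φ.pathMap x}).Finite ∧
    (G.PathSet ∩ φ.pathMap ⁻¹' {φ.pathMap x}).ncard = d

/-- A homomorphism is an isomorphism of graphs if it is bijective on edges and
on vertices. -/
def IsIso (φ : GraphHom G H) : Prop :=
  Function.Bijective φ.toFun ∧ Function.Bijective φ.vFun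

end GraphHom

/-- The standard Bernoulli graph: a single vertex, edge set `I` with weights `ρ`. -/
def bernoulliGraph {I : Type*} (ρ : I → ℝ≥0∞) : PreGraph I Unit :=
  ⟨fun _ => (), fun _ => (), ρ⟩

/-- The graph skew product `H̄ₐ` of `H` by a function `a` into the permutations of
`Fin d`. -/
def gsp (H : PreGraph F W) {d : ℕ} (a : F → Equiv.Perm (Fin d)) :
    PreGraph (F × Fin d) (W × Fin d) where
  s := fun hy => (H.s hy.1, hy.2)
  t := fun hy => (H.t hy.1, a hy.1 hy.2)
  p := fun hy => H.p hy.1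

/-- Two functions `a₁ a₂ : H → 𝒜_d` are cohomologous with respect to `H`. -/
def Cohomologous (H : PreGraph F W) {d : ℕ} (a₁ a₂ : F → Equiv.Perm (Fin d)) : Prop :=
  ∃ w : W → Equiv.Perm (Fin d), ∀ h, a₂ h * w (H.s h) = w (H.t h) * a₁ h

/-- The map `fᵢ : G⁰ → G⁰` induced by a homomorphism onto the Bernoulli graph:
`fᵢ u` is the target of the unique edge starting at `u` sent to `i`. -/
def GraphHom.fmap {I : Type*} {G : PreGraph E V} {ρ : I → ℝ≥0∞}
    (φ : GraphHom G (bernoulliGraph ρ)) (i : I) (u : V) : V :=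
  G.t (φ.deterministic u i (Subsingleton.elim _ _)).exists.choose

/-- Composite of the maps determined by a finite word. -/
def compWord {U I : Type*} (f : I → U → U) {n : ℕ} (w : Fin n → I) : U → U :=
  (List.ofFn fun k => f (w k)).foldr (· ∘ ·) id

/-- The semigroup (set of all nonempty finite composites) generated by a family of
self-maps. -/
def genSem {U I : Type*} (f : I → U → U) : Set (U → U) :=
  {g | ∃ (n : ℕ) (w : Fin (n + 1) → I), g = compWord f w}

/-- `L` is a persistent `d`-set for the semigroup `S` of self-maps of `U`. -/
def PersistentSet {U : Type*} (S : Set (U → U)) (d : ℕ) (L : Set U) : Prop :=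
  L.Finite ∧ L.ncard = d ∧ (∀ f ∈ S, (f '' L).ncard = d) ∧
    ∀ A : Set U, A.Finite → ∃ f ∈ S, f '' A ⊆ L

/-- The semigroup `S` is `d`-contractive. -/
def IsDContractive {U : Type*} (S : Set (U → U)) (d : ℕ) : Prop :=
  ∃ L, PersistentSet S d L

/-- The itinerary (canonical factor) map of an endomorphism `T` relative to `δ`. -/
def itin {X I : Type*} (T : X → X) (δ : X → I) (x : X) : ℕ → I := fun n => δ (T^[n] x)

/-- `δ ∈ Δ_ρ(T)`: `δ` has law `ρ`, the σ-algebra generated by `δ` is independent of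
`T⁻¹𝓑`, and together they generate the whole σ-algebra modulo null sets. -/
def IsUniformGenerator {X : Type*} [mX : MeasurableSpace X] {I : Type*} (ρ : I → ℝ≥0∞)
    (m : Measure X) (T : X → X) (δ : X → I) : Prop :=
  DMeasurable δ ∧ (∀ i, m (δ ⁻¹' {i}) = ρ i) ∧
    ProbabilityTheory.Indep (MeasurableSpace.comap δ ⊤) (mX.comap T) m ∧
    ∀ A : Set X, MeasurableSet A →
      ∃ B : Set X, MeasurableSet[MeasurableSpace.comap δ ⊤ ⊔ mX.comap T] B ∧
        m (symmDiff A B) = 0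

/-- The fibers of `Φ` have cardinality `d ∈ ℕ∞` almost everywhere. -/
def HasFiberCard {X : Type*} [MeasurableSpace X] {I : Type*} (m : Measure X)
    (Φ : X → ℕ → I) (d : ℕ∞) : Prop :=
  ∀ᵐ x ∂m, (Φ ⁻¹' {Φ x}).encard = d

/-- `d` is the minimal index `d(T)` of the `ρ`-uniform endomorphism `T`. -/
def HasMinimalIndex {X : Type*} [MeasurableSpace X] {I : Type*} (ρ : I → ℝ≥0∞)
    (m : Measure X) (T : X → X) (d : ℕ∞) : Prop :=
  (∃ δ : X → I, IsUniformGenerator ρ m T δ ∧ HasFiberCard m (itin T δ) d) ∧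
    ∀ (δ : X → I) (d' : ℕ∞),
      IsUniformGenerator ρ m T δ → HasFiberCard m (itin T δ) d' → d ≤ d'

/-- The uniform probability measure on `Fin d`. -/
def unif (d : ℕ) : Measure (Fin d) := (d : ℝ≥0∞)⁻¹ • Measure.count

/-- The `n`-stringing graph `G⁽ⁿ⁾`: edges are the backward paths of length `n+1`,
vertices the backward paths of length `n`. -/
def stringing (G : PreGraph E V) (n : ℕ) :
    PreGraph {g : Fin (n + 1) → E // G.IsPathW g} {g : Fin n → E // G.IsPathW g} where
  s := fun g => ⟨fun k => g.1 k.succ, fun k h => g.2 (k + 1) (Nat.succ_lt_succ h)⟩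
  t := fun g => ⟨fun k => g.1 k.castSucc, fun k h => g.2 k (Nat.lt_succ_of_lt h)⟩
  p := fun g => ∏ k, G.p (g.1 k)

/-- A `(π,ψ)`-extension in `Ext^d(I,ρ)`: a graph skew product `d`-extension
`H̄ₐ → H` of a positively recurrent graph `H` admitting a degree-one homomorphism
`ψ : H → I` onto the Bernoulli graph, with `H̄ₐ` irreducible. -/
structure PiPsiExt (I : Type) (ρ : I → ℝ≥0∞) (d : ℕ) where
  F : Type
  W : Type
  countF : Countable F
  countW : Countable W
  H : PreGraph F W
  stoch : H.IsStochastic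
  a : F → Equiv.Perm (Fin d)
  ψ : GraphHom H (bernoulliGraph ρ)
  p0 : W → ℝ≥0∞
  stat : H.IsStationary p0
  m : Measure (ℕ → F)
  markov : H.IsMarkovMeasure p0 m
  deg1 : ψ.HasDegree m 1
  irr : (gsp H a).Irreducible

/-- The partial order on `Ext^d(I,ρ)`: `P₁ ≼ P` via homomorphisms `κ, κ̄` making the
diagram commute, with `a₁ ∘ κ` cohomologous to `a`. -/
def ExtLE {I : Type} {ρ : I → ℝ≥0∞} {d : ℕ} (P₁ P : PiPsiExt I ρ d) : Prop :=
  ∃ (κ : GraphHom P.H P₁.H) (κb : GraphHom (gsp P.H P.a) (gsp P₁.H P₁.a)),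
    (∀ g : P.F × Fin d, (κb.toFun g).1 = κ.toFun g.1) ∧
    (∀ g : P.F, P.ψ.toFun g = P₁.ψ.toFun (κ.toFun g)) ∧
    Cohomologous P.H P.a (fun h => P₁.a (κ.toFun h))

/-- Equivalence of `(π,ψ)`-extensions: as `ExtLE` but with `κ, κ̄` isomorphisms. -/
def ExtEquiv {I : Type} {ρ : I → ℝ≥0∞} {d : ℕ} (P₁ P : PiPsiExt I ρ d) : Prop :=
  ∃ (κ : GraphHom P.H P₁.H) (κb : GraphHom (gsp P.H P.a) (gsp P₁.H P₁.a)),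
    κ.IsIso ∧ κb.IsIso ∧
    (∀ g : P.F × Fin d, (κb.toFun g).1 = κ.toFun g.1) ∧
    (∀ g : P.F, P.ψ.toFun g = P₁.ψ.toFun (κ.toFun g)) ∧
    Cohomologous P.H P.a (fun h => P₁.a (κ.toFun h))

/-- An irreducible element of `(Ext^d(I,ρ), ≼)`. -/
def ExtIrreducible {I : Type} {ρ : I → ℝ≥0∞} {d : ℕ} (P : PiPsiExt I ρ d) : Prop :=
  ∀ P₁ : PiPsiExt I ρ d, ExtLE P₁ P → ExtEquiv P₁ P

end

end OneSidedMarkov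

namespace OneSidedMarkov

open MeasureTheory
open scoped ENNReal

/-!
Iterating the cocycle equation `n` times gives `W x = P₂ * W (Tⁿ x) * P₁⁻¹`, where `Pₖ` is the
product of the `aₖ` along the first `n` letters of `x`. As `Tⁿ x` is independent of those letters,
on every cylinder `[u]` the law of `W` is the law `ν` of `W` translated by the permutation
`g ↦ P₂(u)⁻¹ * g * P₁(u)`. So if `g₀` maximizes `ν`, then `μ ({W = g₀} ∩ [u]) ≤ ν g₀ * μ [u]`
for all cylinders; approximating `{W = g₀}` by finite unions of cylinders yields
`ν g₀ ≤ ν g₀ ^ 2`, whence `ν g₀ = 1`.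
-/

open Set
open scoped symmDiff

section Cylinders

variable {I : Type*}

lemma shift_iterate_apply (n : ℕ) (x : ℕ → I) (k : ℕ) : shift^[n] x k = x (k + n) := by
  induction n generalizing x with
  | zero => rfl
  | succ n ih => rw [Function.iterate_succ_apply, ih]; rfl

lemma measurable_shift : Measurable (shift : (ℕ → I) → ℕ → I) :=
  letI : MeasurableSpace I := ⊤
  measurable_pi_lambda _ fun n => measurable_pi_apply (n + 1)

lemma measurableSet_cyl {n : ℕ} (u : Fin n → I) : MeasurableSet (cyl u) := by
  let : MeasurableSpace I := ⊤
  have : cyl u = ⋂ k : Fin n, (fun x : ℕ → I => x k) ⁻¹' {u k} := by ext; simp [cyl]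
  rw [this]
  exact .iInter fun k => measurable_pi_apply _ trivial

lemma mem_cyl_iff {n : ℕ} {u : Fin n → I} {x : ℕ → I} :
    x ∈ cyl u ↔ (fun k : Fin n => x k) = u :=
  funext_iff.symm

lemma pairwise_disjoint_cyl (n : ℕ) : Pairwise fun u v : Fin n → I => Disjoint (cyl u) (cyl v) :=
  fun _ _ huv => disjoint_left.2 fun _ hx hx' => huv (mem_cyl_iff.1 hx ▸ mem_cyl_iff.1 hx')

lemma iUnion_cyl (n : ℕ) : ⋃ u : Fin n → I, cyl u = univ :=
  eq_univ_of_forall fun x => mem_iUnion.2 ⟨fun k => x k, fun _ => rfl⟩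

lemma cyl_fin_zero (u : Fin 0 → I) : cyl u = univ :=
  eq_univ_of_forall fun _ k => k.elim0

lemma cyl_inter_preimage_shift_iterate {n m : ℕ} (u : Fin n → I) (w : Fin m → I) :
    cyl u ∩ shift^[n] ⁻¹' cyl w = cyl (Fin.append u w) := by
  ext x
  simp only [cyl, mem_inter_iff, mem_preimage, mem_ofPred_eq, shift_iterate_apply,
    Fin.forall_fin_add (m := n), Fin.append_left, Fin.append_right, Fin.val_castAdd,
    Fin.val_natAdd, Nat.add_comm]

def finCylinders (I : Type*) : Set (Set (ℕ → I)) :=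
  @measurableCylinders ℕ (fun _ => I) fun _ => ⊤

lemma isSetRing_finCylinders : IsSetRing (finCylinders I) :=
  @isSetRing_measurableCylinders ℕ (fun _ => I) fun _ => ⊤

lemma univ_mem_finCylinders : univ ∈ finCylinders I :=
  @univ_mem_measurableCylinders ℕ (fun _ => I) fun _ => ⊤

lemma seqMS_eq_generateFrom_finCylinders :
    seqMS I = MeasurableSpace.generateFrom (finCylinders I) :=
  (@generateFrom_measurableCylinders ℕ (fun _ => I) fun _ => ⊤).symm

lemma exists_eq_biUnion_cyl_of_mem_finCylinders {t : Set (ℕ → I)} (ht : t ∈ finCylinders I) :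
    ∃ (n : ℕ) (S : Set (Fin n → I)), t = ⋃ u ∈ S, cyl u := by
  rw [finCylinders, @measurableCylinders_nat] at ht
  simp only [mem_iUnion, mem_singleton_iff] at ht
  obtain ⟨a, S, -, rfl⟩ := ht
  refine ⟨a + 1,
    {u | (fun i : Finset.Iic a => u ⟨i, Nat.lt_succ_of_le (Finset.mem_Iic.1 i.2)⟩) ∈ S}, ?_⟩
  ext x
  simp only [cylinder, mem_preimage, mem_iUnion, mem_ofPred_eq, exists_prop]
  constructor
  · intro hx
    exact ⟨fun k => x k, hx, fun _ => rfl⟩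
  · rintro ⟨u, hu, hxu⟩
    convert hu using 2 with i
    exact hxu ⟨i, _⟩

end Cylinders

section CylinderMeasure

variable {I : Type*} [Countable I]

lemma measure_biUnion_cyl (ν : Measure (ℕ → I)) {n : ℕ} (S : Set (Fin n → I)) :
    ν (⋃ u ∈ S, cyl u) = ∑' u : S, ν (cyl u.1) :=
  measure_biUnion S.to_countable (fun _ _ _ _ huv => pairwise_disjoint_cyl n huv)
    fun u _ => measurableSet_cyl u

lemma tsum_measure_cyl (ν : Measure (ℕ → I)) (n : ℕ) :
    ∑' u : Fin n → I, ν (cyl u) = ν univ := by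
  rw [← measure_iUnion (pairwise_disjoint_cyl n) measurableSet_cyl, iUnion_cyl]

lemma Measure.ext_of_cyl {ν₁ ν₂ : Measure (ℕ → I)} [IsFiniteMeasure ν₁]
    (h : ∀ (n : ℕ) (u : Fin n → I), ν₁ (cyl u) = ν₂ (cyl u)) : ν₁ = ν₂ := by
  refine ext_of_generate_finite _ seqMS_eq_generateFrom_finCylinders
    isSetRing_finCylinders.isSetSemiring.isPiSystem (fun t ht => ?_) ?_
  · obtain ⟨n, S, rfl⟩ := exists_eq_biUnion_cyl_of_mem_finCylinders ht
    simp_rw [measure_biUnion_cyl, h]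
  · simpa [cyl_fin_zero] using h 0 Fin.elim0

lemma measure_inter_le_of_forall_cyl {μ : Measure (ℕ → I)} [IsFiniteMeasure μ]
    {A B : Set (ℕ → I)} {M : ℝ≥0∞} (hM : M ≠ ⊤)
    (hA : ∀ (n : ℕ) (u : Fin n → I), μ (A ∩ cyl u) ≤ M * μ (cyl u)) (hB : MeasurableSet B) :
    μ (A ∩ B) ≤ M * μ B := by
  have hring : ∀ t ∈ finCylinders I, μ (A ∩ t) ≤ M * μ t := by
    intro t ht
    obtain ⟨n, S, rfl⟩ := exists_eq_biUnion_cyl_of_mem_finCylinders ht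
    calc μ (A ∩ ⋃ u ∈ S, cyl u) = ∑' u : S, μ (A ∩ cyl u.1) := by
          rw [inter_comm, ← Measure.restrict_apply (.biUnion S.to_countable fun u _ =>
            measurableSet_cyl u), measure_biUnion_cyl]
          simp_rw [Measure.restrict_apply (measurableSet_cyl _), inter_comm]
      _ ≤ ∑' u : S, M * μ (cyl u.1) := ENNReal.tsum_le_tsum fun u => hA n u
      _ = M * μ (⋃ u ∈ S, cyl u) := by rw [ENNReal.tsum_mul_left, measure_biUnion_cyl]
  refine ENNReal.le_of_forall_pos_le_add fun ε hε _ => ?_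
  obtain ⟨δ, hδ, hδε⟩ := ENNReal.exists_nnreal_pos_mul_lt (a := M + 1) (by simpa using hM)
    (ENNReal.coe_ne_zero.2 hε.ne')
  obtain ⟨t, ht, htB⟩ := exists_measure_symmDiff_lt_of_generateFrom_isSetRing (μ := μ)
    isSetRing_finCylinders
    ⟨{univ}, countable_singleton _, singleton_subset_iff.2 univ_mem_finCylinders, by simp⟩
    seqMS_eq_generateFrom_finCylinders hB (ENNReal.coe_pos.2 hδ)
  have htB' : μ t ≤ μ B + δ :=
    calc μ t ≤ μ (B ∪ t ∆ B) :=
          measure_mono fun x hx => by by_cases x ∈ B <;> simp_all [mem_symmDiff]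
      _ ≤ μ B + δ := (measure_union_le _ _).trans (by gcongr)
  calc μ (A ∩ B) ≤ μ (A ∩ t ∪ t ∆ B) :=
        measure_mono fun x hx => by by_cases x ∈ t <;> simp_all [mem_symmDiff]
    _ ≤ M * μ t + δ := (measure_union_le _ _).trans (add_le_add (hring t ht) htB.le)
    _ ≤ M * (μ B + δ) + δ := by gcongr
    _ = M * μ B + δ * (M + 1) := by ring
    _ ≤ M * μ B + ε := by gcongr

lemma measure_eq_zero_or_one_of_forall_cyl {μ : Measure (ℕ → I)} [IsProbabilityMeasure μ]
    {A : Set (ℕ → I)} (hA : MeasurableSet A)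
    (h : ∀ (n : ℕ) (u : Fin n → I), μ (A ∩ cyl u) ≤ μ A * μ (cyl u)) :
    μ A = 0 ∨ μ A = 1 := by
  refine or_iff_not_imp_left.2 fun hA0 => le_antisymm prob_le_one ?_
  have hsq : μ A * 1 ≤ μ A * μ A := by
    simpa using measure_inter_le_of_forall_cyl (measure_ne_top μ A) h hA
  exact (ENNReal.mul_le_mul_iff_right hA0 (measure_ne_top μ A)).1 hsq

end CylinderMeasure

namespace IsProductMeasure

variable {I : Type*} {ρ : I → ℝ≥0∞} {μ : Measure (ℕ → I)}

lemma apply_of_ae_apply_zero (hμ : IsProductMeasure ρ μ) (hρ : ∀ i, 0 < ρ i) {p : I → Prop}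
    (h : ∀ᵐ x ∂μ, p (x 0)) (i : I) : p i := by
  by_contra hi
  have hcyl : μ (cyl fun _ : Fin 1 => i) = ρ i := by simp [hμ.2]
  refine (hρ i).ne' (hcyl ▸ measure_mono_null (fun x hx => ?_) (ae_iff.1 h))
  change ¬p (x ((0 : Fin 1) : ℕ))
  rwa [hx 0]

variable [Countable I]

lemma measure_cyl_inter_preimage_shift_iterate (hμ : IsProductMeasure ρ μ) {n : ℕ}
    (u : Fin n → I) {D : Set (ℕ → I)} (hD : MeasurableSet D) :
    μ (cyl u ∩ shift^[n] ⁻¹' D) = μ (cyl u) * μ D := by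
  have : IsProbabilityMeasure μ := hμ.1
  have hmeas : Measurable (shift^[n] : (ℕ → I) → ℕ → I) := measurable_shift.iterate n
  have hmap : (μ.restrict (cyl u)).map shift^[n] = μ (cyl u) • μ := by
    refine Measure.ext_of_cyl fun m w => ?_
    rw [Measure.map_apply hmeas (measurableSet_cyl w),
      Measure.restrict_apply (hmeas (measurableSet_cyl w)), inter_comm,
      cyl_inter_preimage_shift_iterate, Measure.smul_apply, smul_eq_mul, hμ.2, hμ.2, hμ.2,
      Fin.prod_univ_add]
    simp only [Fin.append_left, Fin.append_right]
  have := congrArg (· D) hmap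
  simp only [Measure.map_apply hmeas hD, Measure.restrict_apply (hmeas hD), Measure.smul_apply,
    smul_eq_mul] at this
  rwa [inter_comm]

lemma measurePreserving_shift_iterate (hμ : IsProductMeasure ρ μ) (n : ℕ) :
    MeasurePreserving shift^[n] μ μ := by
  refine ⟨measurable_shift.iterate n, Measure.ext fun D hD => ?_⟩
  have : IsProbabilityMeasure μ := hμ.1
  rw [Measure.map_apply (measurable_shift.iterate n) hD, ← Measure.restrict_apply_univ,
    ← tsum_measure_cyl _ n]
  simp_rw [Measure.restrict_apply (measurableSet_cyl _),
    hμ.measure_cyl_inter_preimage_shift_iterate _ hD, ENNReal.tsum_mul_right, tsum_measure_cyl,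
    measure_univ, one_mul]

end IsProductMeasure

section Cocycle

variable {I G : Type*} [Group G]

def wordProd (a : I → G) {n : ℕ} (u : Fin n → I) : G := (List.ofFn fun k => a (u k)).prod

lemma inv_mul_eq_mul_inv_iff {a b w : G} : a⁻¹ * w = w * b⁻¹ ↔ a * w = w * b := by
  rw [eq_comm, eq_comm (a := a * w)]
  exact SemiconjBy.inv_right_iff

lemma iterate_cocycle {X : Type*} {T : X → X} {W α β : X → G} {x : X}
    (h : ∀ k, W (T^[k] x) = α (T^[k] x) * W (T^[k + 1] x) * (β (T^[k] x))⁻¹) (n : ℕ) :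
    W x = (List.ofFn fun k : Fin n => α (T^[k] x)).prod * W (T^[n] x) *
      (List.ofFn fun k : Fin n => β (T^[k] x)).prod⁻¹ := by
  induction n with
  | zero => simp
  | succ n ih =>
    rw [ih, h n, List.ofFn_succ', List.ofFn_succ', List.prod_concat, List.prod_concat]
    simp only [Fin.val_castSucc, Fin.val_last]
    group

variable [Countable I] {ρ : I → ℝ≥0∞} {μ : Measure (ℕ → I)} {a₁ a₂ : I → G}
  {W : (ℕ → I) → G}

namespace IsProductMeasure

lemma ae_forall_eq_wordProd_mul_shift_iterate (hμ : IsProductMeasure ρ μ)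
    (hcoc : ∀ᵐ x ∂μ, (a₂ (x 0))⁻¹ * W x = W (shift x) * (a₁ (x 0))⁻¹) :
    ∀ᵐ x ∂μ, ∀ n, W x = wordProd a₂ (fun k : Fin n => x k) * W (shift^[n] x) *
      (wordProd a₁ fun k : Fin n => x k)⁻¹ := by
  have hstep : ∀ᵐ x ∂μ, ∀ k, W (shift^[k] x) =
      a₂ (shift^[k] x 0) * W (shift^[k + 1] x) * (a₁ (shift^[k] x 0))⁻¹ :=
    ae_all_iff.2 fun k =>
      ((hμ.measurePreserving_shift_iterate k).quasiMeasurePreserving.ae hcoc).mono fun x hx => by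
        rw [Function.iterate_succ_apply', mul_assoc, ← hx, mul_inv_cancel_left]
  filter_upwards [hstep] with x hx n
  simpa only [wordProd, shift_iterate_apply, zero_add] using
    iterate_cocycle (α := fun y : ℕ → I => a₂ (y 0)) (β := fun y : ℕ → I => a₁ (y 0)) hx n

lemma measure_preimage_inter_cyl_of_cocycle (hμ : IsProductMeasure ρ μ) (hW : DMeasurable W)
    (hcoc : ∀ᵐ x ∂μ, (a₂ (x 0))⁻¹ * W x = W (shift x) * (a₁ (x 0))⁻¹) (g : G) {n : ℕ}
    (u : Fin n → I) :
    μ (W ⁻¹' {g} ∩ cyl u) = μ (cyl u) * μ (W ⁻¹' {(wordProd a₂ u)⁻¹ * g * wordProd a₁ u}) := by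
  rw [← hμ.measure_cyl_inter_preimage_shift_iterate u (hW _)]
  refine measure_congr (Filter.eventuallyEq_set.2 ?_)
  filter_upwards [hμ.ae_forall_eq_wordProd_mul_shift_iterate hcoc] with x hx
  by_cases hxu : x ∈ cyl u
  · simp only [mem_inter_iff, mem_preimage, mem_singleton_iff, hxu, and_true, true_and]
    rw [hx n, mem_cyl_iff.1 hxu]
    constructor
    · rintro rfl
      group
    · rintro h
      rw [h]
      group
  · simp [hxu]

theorem exists_ae_eq_of_cocycle [Finite G] (hμ : IsProductMeasure ρ μ) (hW : DMeasurable W)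
    (hcoc : ∀ᵐ x ∂μ, (a₂ (x 0))⁻¹ * W x = W (shift x) * (a₁ (x 0))⁻¹) :
    ∃ w₀, ∀ᵐ x ∂μ, W x = w₀ := by
  have : IsProbabilityMeasure μ := hμ.1
  obtain ⟨g₀, hg₀⟩ := Finite.exists_max fun g => μ (W ⁻¹' {g})
  have hcyl (n : ℕ) (u : Fin n → I) : μ (W ⁻¹' {g₀} ∩ cyl u) ≤ μ (W ⁻¹' {g₀}) * μ (cyl u) := by
    rw [hμ.measure_preimage_inter_cyl_of_cocycle hW hcoc, mul_comm]
    gcongr ?_ * _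
    exact hg₀ _
  rcases measure_eq_zero_or_one_of_forall_cyl (hW g₀) hcyl with h0 | h1
  · refine absurd (measure_iUnion_null fun g => nonpos_iff_eq_zero.1 (h0 ▸ hg₀ g)) ?_
    rw [← preimage_iUnion, iUnion_of_singleton, preimage_univ, measure_univ]
    exact one_ne_zero
  · exact ⟨g₀, (ae_iff_measure_eq (hW g₀).nullMeasurableSet).2 (h1.trans measure_univ.symm)⟩

end IsProductMeasure

end Cocycle

theorem stmt0_general {I : Type} [Countable I]
    (ρ : I → ℝ≥0∞) (hρ : IsProbVector ρ)
    (μ : Measure (ℕ → I)) (hμ : IsProductMeasure ρ μ)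
    (d : ℕ) (a₁ a₂ : I → Equiv.Perm (Fin d)) :
    (∀ W : (ℕ → I) → Equiv.Perm (Fin d), DMeasurable W →
      (∀ᵐ x ∂μ, (a₂ (x 0))⁻¹ * W x = W (shift x) * (a₁ (x 0))⁻¹) →
      ∃ w₀ : Equiv.Perm (Fin d), ∀ᵐ x ∂μ, W x = w₀) ∧
    ((∃ W : (ℕ → I) → Equiv.Perm (Fin d), DMeasurable W ∧
        ∀ᵐ x ∂μ, (a₂ (x 0))⁻¹ * W x = W (shift x) * (a₁ (x 0))⁻¹) ↔
      ∃ w₀ : Equiv.Perm (Fin d), ∀ i, a₂ i * w₀ = w₀ * a₁ i) := by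
  have hconst := fun W (hW : DMeasurable W) =>
    hμ.exists_ae_eq_of_cocycle (a₁ := a₁) (a₂ := a₂) hW
  refine ⟨hconst, ⟨fun ⟨W, hW, hcoc⟩ => ?_, fun ⟨w₀, hw₀⟩ => ?_⟩⟩
  · obtain ⟨w₀, hW₀⟩ := hconst W hW hcoc
    have hW₀_shift := (hμ.measurePreserving_shift_iterate 1).quasiMeasurePreserving.ae hW₀
    refine ⟨w₀, hμ.apply_of_ae_apply_zero hρ.1 ?_⟩
    filter_upwards [hcoc, hW₀, hW₀_shift] with x hx h₀ h₁
    rw [h₀, ← Function.iterate_one shift, h₁] at hx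
    exact inv_mul_eq_mul_inv_iff.1 hx
  · exact ⟨fun _ => w₀, fun g => MeasurableSet.const (w₀ = g),
      ae_of_all _ fun x => inv_mul_eq_mul_inv_iff.2 (hw₀ (x 0))⟩

/-- For the one-sided Bernoulli shift `T_ρ` on `X_ρ = I^ℕ` and two
functions `a₁ a₂ : I → 𝒜_d`, any measurable solution `W` of the cocycle equation
`A₂(x)·W(x) = W(T_ρ x)·A₁(x)` (where `A_k x = (a_k x₁)⁻¹`) is a.e. constant;
consequently `A₁, A₂` are cohomologous with respect to `T_ρ` iff `a₁, a₂` are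
conjugate in `𝒜_d`. -/
theorem stmt0 {I : Type} [Countable I] [Nontrivial I]
    (ρ : I → ℝ≥0∞) (hρ : IsProbVector ρ)
    (μ : Measure (ℕ → I)) (hμ : IsProductMeasure ρ μ)
    (d : ℕ) (a₁ a₂ : I → Equiv.Perm (Fin d)) :
    (∀ W : (ℕ → I) → Equiv.Perm (Fin d), DMeasurable W →
      (∀ᵐ x ∂μ, (a₂ (x 0))⁻¹ * W x = W (shift x) * (a₁ (x 0))⁻¹) →
      ∃ w₀ : Equiv.Perm (Fin d), ∀ᵐ x ∂μ, W x = w₀) ∧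
    ((∃ W : (ℕ → I) → Equiv.Perm (Fin d), DMeasurable W ∧
        ∀ᵐ x ∂μ, (a₂ (x 0))⁻¹ * W x = W (shift x) * (a₁ (x 0))⁻¹) ↔
      ∃ w₀ : Equiv.Perm (Fin d), ∀ i, a₂ i * w₀ = w₀ * a₁ i) :=
  stmt0_general ρ hρ μ hμ d a₁ a₂

end OneSidedMarkov
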